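/- arXiv:1201.0472 — 5 statements merged into one kernel-verified Lean document; each statement's English description precedes it below -/
import Mathlib

section
/- In the Weyl algebra (ring of differential operators with rational function coefficients) in variables $y_1, y_2$, define $g_1 = y_1\partial_1^2 + (c-y_1)\partial_1 + \frac{1}{2}\frac{y_2}{y_1-y_2}(\partial_1-\partial_2) - a$ and $g_2 = y_2\partial_2^2 + (c-y_2)\partial_2 + \frac{1}{2}\frac{y_1}{y_2-y_1}(\partial_2-\partial_1) - a$. Then the commutator satisfies $[g_1,g_2] = g_1 g_2 - g_2 g_1 = -\frac{1}{2}\frac{y_1+y_2}{(y_1-y_2)^2}(g_1-g_2)$. -/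
noncomputable def d1 (F : ℝ → ℝ → ℝ) : ℝ → ℝ → ℝ := fun y₁ y₂ => deriv (fun t => F t y₂) y₁

noncomputable def d2 (F : ℝ → ℝ → ℝ) : ℝ → ℝ → ℝ := fun y₁ y₂ => deriv (fun t => F y₁ t) y₂

/-- Muirhead's operator `g₁`. -/
noncomputable def g1op (a c : ℝ) (F : ℝ → ℝ → ℝ) : ℝ → ℝ → ℝ := fun y₁ y₂ =>
  y₁ * d1 (d1 F) y₁ y₂ + (c - y₁) * d1 F y₁ y₂
    + 1 / 2 * (y₂ / (y₁ - y₂)) * (d1 F y₁ y₂ - d2 F y₁ y₂) - a * F y₁ y₂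

/-- Muirhead's operator `g₂`. -/
noncomputable def g2op (a c : ℝ) (F : ℝ → ℝ → ℝ) : ℝ → ℝ → ℝ := fun y₁ y₂ =>
  y₂ * d2 (d2 F) y₁ y₂ + (c - y₂) * d2 F y₁ y₂
    + 1 / 2 * (y₁ / (y₂ - y₁)) * (d2 F y₁ y₂ - d1 F y₁ y₂) - a * F y₁ y₂

namespace MC
open Filter Topology

def U : Set (ℝ × ℝ) := {p : ℝ × ℝ | p.1 ≠ p.2 ∧ p.1 * p.2 ≠ 0}

lemma isOpen_U : IsOpen U :=
  (isOpen_ne_fun continuous_fst continuous_snd).inter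
    (isOpen_ne_fun (continuous_fst.mul continuous_snd) continuous_const)

def Sm (G : ℝ → ℝ → ℝ) : Prop := ContDiffOn ℝ (⊤ : ℕ∞) (fun p : ℝ × ℝ => G p.1 p.2) U

variable {G H : ℝ → ℝ → ℝ} {y₁ y₂ : ℝ}

lemma Sm.cdAt (hG : Sm G) (hx : (y₁, y₂) ∈ U) :
    ContDiffAt ℝ (⊤ : ℕ∞) (fun p : ℝ × ℝ => G p.1 p.2) (y₁, y₂) :=
  hG.contDiffAt (isOpen_U.mem_nhds hx)

lemma d1_eq_fderiv (hG : Sm G) (hx : (y₁, y₂) ∈ U) :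
    d1 G y₁ y₂ = fderiv ℝ (fun p : ℝ × ℝ => G p.1 p.2) (y₁, y₂) (1, 0) := by
  have hd : DifferentiableAt ℝ (fun p : ℝ × ℝ => G p.1 p.2) (y₁, y₂) :=
    (hG.cdAt hx).differentiableAt (by simp)
  have h1 : HasDerivAt (fun t : ℝ => ((t, y₂) : ℝ × ℝ)) (1, 0) y₁ :=
    (hasDerivAt_id y₁).prodMk (hasDerivAt_const y₁ y₂)
  exact (hd.hasFDerivAt.comp_hasDerivAt y₁ h1).deriv

lemma d2_eq_fderiv (hG : Sm G) (hx : (y₁, y₂) ∈ U) :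
    d2 G y₁ y₂ = fderiv ℝ (fun p : ℝ × ℝ => G p.1 p.2) (y₁, y₂) (0, 1) := by
  have hd : DifferentiableAt ℝ (fun p : ℝ × ℝ => G p.1 p.2) (y₁, y₂) :=
    (hG.cdAt hx).differentiableAt (by simp)
  have h1 : HasDerivAt (fun t : ℝ => ((y₁, t) : ℝ × ℝ)) (0, 1) y₂ :=
    (hasDerivAt_const y₂ y₁).prodMk (hasDerivAt_id y₂)
  exact (hd.hasFDerivAt.comp_hasDerivAt y₂ h1).deriv

lemma hasDerivAt_d1 (hG : Sm G) (hx : (y₁, y₂) ∈ U) :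
    HasDerivAt (fun t => G t y₂) (d1 G y₁ y₂) y₁ := by
  rw [d1_eq_fderiv hG hx]
  have hd : DifferentiableAt ℝ (fun p : ℝ × ℝ => G p.1 p.2) (y₁, y₂) :=
    (hG.cdAt hx).differentiableAt (by simp)
  have h1 : HasDerivAt (fun t : ℝ => ((t, y₂) : ℝ × ℝ)) (1, 0) y₁ :=
    (hasDerivAt_id y₁).prodMk (hasDerivAt_const y₁ y₂)
  exact hd.hasFDerivAt.comp_hasDerivAt y₁ h1

lemma hasDerivAt_d2 (hG : Sm G) (hx : (y₁, y₂) ∈ U) :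
    HasDerivAt (fun t => G y₁ t) (d2 G y₁ y₂) y₂ := by
  rw [d2_eq_fderiv hG hx]
  have hd : DifferentiableAt ℝ (fun p : ℝ × ℝ => G p.1 p.2) (y₁, y₂) :=
    (hG.cdAt hx).differentiableAt (by simp)
  have h1 : HasDerivAt (fun t : ℝ => ((y₁, t) : ℝ × ℝ)) (0, 1) y₂ :=
    (hasDerivAt_const y₂ y₁).prodMk (hasDerivAt_id y₂)
  exact hd.hasFDerivAt.comp_hasDerivAt y₂ h1

lemma smooth_fderiv (hG : Sm G) :
    ContDiffOn ℝ (⊤ : ℕ∞) (fderiv ℝ (fun p : ℝ × ℝ => G p.1 p.2)) U :=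
  hG.fderiv_of_isOpen isOpen_U (by simp)

lemma Sm.d1 (hG : Sm G) : Sm (_root_.d1 G) := by
  have h2 : ContDiffOn ℝ (⊤ : ℕ∞) (fun p : ℝ × ℝ => fderiv ℝ (fun q : ℝ × ℝ => G q.1 q.2) p (1, 0)) U :=
    (smooth_fderiv hG).clm_apply contDiffOn_const
  exact h2.congr fun p hp => d1_eq_fderiv hG hp

lemma Sm.d2 (hG : Sm G) : Sm (_root_.d2 G) := by
  have h2 : ContDiffOn ℝ (⊤ : ℕ∞) (fun p : ℝ × ℝ => fderiv ℝ (fun q : ℝ × ℝ => G q.1 q.2) p (0, 1)) U :=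
    (smooth_fderiv hG).clm_apply contDiffOn_const
  exact h2.congr fun p hp => d2_eq_fderiv hG hp

lemma swap (hG : Sm G) (hx : (y₁, y₂) ∈ U) :
    d2 (d1 G) y₁ y₂ = d1 (d2 G) y₁ y₂ := by
  set f := fun p : ℝ × ℝ => G p.1 p.2 with hf
  have hsym : IsSymmSndFDerivAt ℝ f (y₁, y₂) :=
    (hG.cdAt hx).isSymmSndFDerivAt (by rw [minSmoothness_of_isRCLikeNormedField]; exact WithTop.coe_le_coe.2 le_top)
  have hdf : DifferentiableAt ℝ (fderiv ℝ f) (y₁, y₂) :=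
    ((smooth_fderiv hG).contDiffAt (isOpen_U.mem_nhds hx)).differentiableAt (by simp)
  have key : ∀ v w : ℝ × ℝ,
      fderiv ℝ (fun p : ℝ × ℝ => fderiv ℝ f p v) (y₁, y₂) w
        = fderiv ℝ (fderiv ℝ f) (y₁, y₂) w v := by
    intro v w
    have h := (ContinuousLinearMap.apply ℝ ℝ v).hasFDerivAt.comp (y₁, y₂) hdf.hasFDerivAt
    have h2 : fderiv ℝ (fun p : ℝ × ℝ => fderiv ℝ f p v) (y₁, y₂)
        = (ContinuousLinearMap.apply ℝ ℝ v).comp (fderiv ℝ (fderiv ℝ f) (y₁, y₂)) := h.fderiv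
    rw [h2]; rfl
  have he1 : (fun p : ℝ × ℝ => _root_.d1 G p.1 p.2) =ᶠ[𝓝 (y₁, y₂)]
      (fun p : ℝ × ℝ => fderiv ℝ f p (1, 0)) := by
    filter_upwards [isOpen_U.mem_nhds hx] with p hp using d1_eq_fderiv hG hp
  have he2 : (fun p : ℝ × ℝ => _root_.d2 G p.1 p.2) =ᶠ[𝓝 (y₁, y₂)]
      (fun p : ℝ × ℝ => fderiv ℝ f p (0, 1)) := by
    filter_upwards [isOpen_U.mem_nhds hx] with p hp using d2_eq_fderiv hG hp
  rw [d2_eq_fderiv hG.d1 hx, he1.fderiv_eq, key, d1_eq_fderiv hG.d2 hx, he2.fderiv_eq, key]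
  exact hsym _ _

lemma d1_congr (h : ∀ p ∈ U, G p.1 p.2 = H p.1 p.2) (hx : (y₁, y₂) ∈ U) :
    d1 G y₁ y₂ = d1 H y₁ y₂ := by
  apply Filter.EventuallyEq.deriv_eq
  have hc : ContinuousAt (fun t : ℝ => ((t, y₂) : ℝ × ℝ)) y₁ := by fun_prop
  filter_upwards [hc.eventually_mem (isOpen_U.mem_nhds hx)] with t ht using h (t, y₂) ht

lemma d2_congr (h : ∀ p ∈ U, G p.1 p.2 = H p.1 p.2) (hx : (y₁, y₂) ∈ U) :
    d2 G y₁ y₂ = d2 H y₁ y₂ := by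
  apply Filter.EventuallyEq.deriv_eq
  have hc : ContinuousAt (fun t : ℝ => ((y₁, t) : ℝ × ℝ)) y₂ := by fun_prop
  filter_upwards [hc.eventually_mem (isOpen_U.mem_nhds hx)] with t ht using h (y₁, t) ht

variable {F : ℝ → ℝ → ℝ}

lemma swapC (hF : Sm F) (hx : (y₁, y₂) ∈ U) :
    d2 (d1 (d1 F)) y₁ y₂ = d1 (d1 (d2 F)) y₁ y₂ :=
  (swap hF.d1 hx).trans (d1_congr (fun p hp => swap hF hp) hx)

lemma swapD (hF : Sm F) (hx : (y₁, y₂) ∈ U) :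
    d2 (d1 (d1 (d2 F))) y₁ y₂ = d1 (d1 (d2 (d2 F))) y₁ y₂ :=
  (swap hF.d2.d1 hx).trans (d1_congr (fun p hp => swap hF.d2 hp) hx)

variable (a c : ℝ)

lemma hx_ne (hx : (y₁, y₂) ∈ U) : y₂ - y₁ ≠ 0 := sub_ne_zero.2 (Ne.symm hx.1)
lemma hx_ne' (hx : (y₁, y₂) ∈ U) : y₁ - y₂ ≠ 0 := sub_ne_zero.2 hx.1

/-- A1 : d1 (g2op F) -/
lemma lA1 (hF : Sm F) (hx : (y₁, y₂) ∈ U) :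
    d1 (g2op a c F) y₁ y₂ =
      y₂ * d1 (d2 (d2 F)) y₁ y₂ + (c - y₂) * d1 (d2 F) y₁ y₂
      + 1 / 2 * (y₂ / (y₂ - y₁) ^ 2) * (d2 F y₁ y₂ - d1 F y₁ y₂)
      + 1 / 2 * (y₁ / (y₂ - y₁)) * (d1 (d2 F) y₁ y₂ - d1 (d1 F) y₁ y₂)
      - a * d1 F y₁ y₂ := by
  have hy := hx_ne hx
  have h02 := hasDerivAt_d1 hF.d2.d2 hx
  have h01 := hasDerivAt_d1 hF.d2 hx
  have h10 := hasDerivAt_d1 hF.d1 hx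
  have h00 := hasDerivAt_d1 hF hx
  have hr : HasDerivAt (fun t : ℝ => t / (y₂ - t)) (y₂ / (y₂ - y₁) ^ 2) y₁ := by
    refine ((hasDerivAt_id y₁).div ((hasDerivAt_const y₁ y₂).sub (hasDerivAt_id y₁)) hy).congr_deriv
      (by simp only [id_eq, Pi.sub_apply]; field_simp <;> ring)
  have key : HasDerivAt (fun t => g2op a c F t y₂)
      (y₂ * d1 (d2 (d2 F)) y₁ y₂ + (c - y₂) * d1 (d2 F) y₁ y₂
      + 1 / 2 * (y₂ / (y₂ - y₁) ^ 2) * (d2 F y₁ y₂ - d1 F y₁ y₂)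
      + 1 / 2 * (y₁ / (y₂ - y₁)) * (d1 (d2 F) y₁ y₂ - d1 (d1 F) y₁ y₂)
      - a * d1 F y₁ y₂) y₁ := by
    refine ((((h02.const_mul y₂).add (h01.const_mul (c - y₂))).add
      ((hr.const_mul (1 / 2 : ℝ)).mul (h01.sub h10))).sub (h00.const_mul a)).congr_deriv ?_
    simp only [id_eq, Pi.sub_apply, Pi.add_apply, Pi.neg_apply, sub_eq_add_neg]; ring
  exact key.deriv

/-- A3 : d2 (g2op F) -/
lemma lA3 (hF : Sm F) (hx : (y₁, y₂) ∈ U) :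
    d2 (g2op a c F) y₁ y₂ =
      d2 (d2 F) y₁ y₂ + y₂ * d2 (d2 (d2 F)) y₁ y₂ - d2 F y₁ y₂
      + (c - y₂) * d2 (d2 F) y₁ y₂
      + 1 / 2 * (-y₁ / (y₂ - y₁) ^ 2) * (d2 F y₁ y₂ - d1 F y₁ y₂)
      + 1 / 2 * (y₁ / (y₂ - y₁)) * (d2 (d2 F) y₁ y₂ - d1 (d2 F) y₁ y₂)
      - a * d2 F y₁ y₂ := by
  have hy := hx_ne hx
  have h02 := hasDerivAt_d2 hF.d2.d2 hx
  have h01 := hasDerivAt_d2 hF.d2 hx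
  have h10 := (hasDerivAt_d2 hF.d1 hx).congr_deriv (swap hF hx)
  have h00 := hasDerivAt_d2 hF hx
  have hr : HasDerivAt (fun s : ℝ => y₁ / (s - y₁)) (-y₁ / (y₂ - y₁) ^ 2) y₂ := by
    refine ((hasDerivAt_const y₂ y₁).div ((hasDerivAt_id y₂).sub (hasDerivAt_const y₂ y₁)) hy).congr_deriv
      (by simp only [id_eq, Pi.sub_apply]; field_simp <;> ring)
  have key : HasDerivAt (fun s => g2op a c F y₁ s)
      (d2 (d2 F) y₁ y₂ + y₂ * d2 (d2 (d2 F)) y₁ y₂ - d2 F y₁ y₂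
      + (c - y₂) * d2 (d2 F) y₁ y₂
      + 1 / 2 * (-y₁ / (y₂ - y₁) ^ 2) * (d2 F y₁ y₂ - d1 F y₁ y₂)
      + 1 / 2 * (y₁ / (y₂ - y₁)) * (d2 (d2 F) y₁ y₂ - d1 (d2 F) y₁ y₂)
      - a * d2 F y₁ y₂) y₂ := by
    refine (((((hasDerivAt_id y₂).mul h02).add
        (((hasDerivAt_const y₂ c).sub (hasDerivAt_id y₂)).mul h01)).add
      ((hr.const_mul (1 / 2 : ℝ)).mul (h01.sub h10))).sub (h00.const_mul a)).congr_deriv ?_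
    simp only [id_eq, Pi.sub_apply, Pi.add_apply, Pi.neg_apply, sub_eq_add_neg]; ring
  exact key.deriv

/-- B3 : d1 (g1op F) -/
lemma lB3 (hF : Sm F) (hx : (y₁, y₂) ∈ U) :
    d1 (g1op a c F) y₁ y₂ =
      d1 (d1 F) y₁ y₂ + y₁ * d1 (d1 (d1 F)) y₁ y₂ - d1 F y₁ y₂
      + (c - y₁) * d1 (d1 F) y₁ y₂
      + 1 / 2 * (-y₂ / (y₁ - y₂) ^ 2) * (d1 F y₁ y₂ - d2 F y₁ y₂)
      + 1 / 2 * (y₂ / (y₁ - y₂)) * (d1 (d1 F) y₁ y₂ - d1 (d2 F) y₁ y₂)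
      - a * d1 F y₁ y₂ := by
  have hy := hx_ne' hx
  have h20 := hasDerivAt_d1 hF.d1.d1 hx
  have h10 := hasDerivAt_d1 hF.d1 hx
  have h01 := hasDerivAt_d1 hF.d2 hx
  have h00 := hasDerivAt_d1 hF hx
  have hr : HasDerivAt (fun t : ℝ => y₂ / (t - y₂)) (-y₂ / (y₁ - y₂) ^ 2) y₁ := by
    refine ((hasDerivAt_const y₁ y₂).div ((hasDerivAt_id y₁).sub (hasDerivAt_const y₁ y₂)) hy).congr_deriv
      (by simp only [id_eq, Pi.sub_apply]; field_simp <;> ring)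
  have key : HasDerivAt (fun t => g1op a c F t y₂)
      (d1 (d1 F) y₁ y₂ + y₁ * d1 (d1 (d1 F)) y₁ y₂ - d1 F y₁ y₂
      + (c - y₁) * d1 (d1 F) y₁ y₂
      + 1 / 2 * (-y₂ / (y₁ - y₂) ^ 2) * (d1 F y₁ y₂ - d2 F y₁ y₂)
      + 1 / 2 * (y₂ / (y₁ - y₂)) * (d1 (d1 F) y₁ y₂ - d1 (d2 F) y₁ y₂)
      - a * d1 F y₁ y₂) y₁ := by
    refine (((((hasDerivAt_id y₁).mul h20).add
        (((hasDerivAt_const y₁ c).sub (hasDerivAt_id y₁)).mul h10)).add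
      ((hr.const_mul (1 / 2 : ℝ)).mul (h10.sub h01))).sub (h00.const_mul a)).congr_deriv ?_
    simp only [id_eq, Pi.sub_apply, Pi.add_apply, Pi.neg_apply, sub_eq_add_neg]; ring
  exact key.deriv

/-- B1 : d2 (g1op F) -/
lemma lB1 (hF : Sm F) (hx : (y₁, y₂) ∈ U) :
    d2 (g1op a c F) y₁ y₂ =
      y₁ * d1 (d1 (d2 F)) y₁ y₂ + (c - y₁) * d1 (d2 F) y₁ y₂
      + 1 / 2 * (y₁ / (y₁ - y₂) ^ 2) * (d1 F y₁ y₂ - d2 F y₁ y₂)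
      + 1 / 2 * (y₂ / (y₁ - y₂)) * (d1 (d2 F) y₁ y₂ - d2 (d2 F) y₁ y₂)
      - a * d2 F y₁ y₂ := by
  have hy := hx_ne' hx
  have h20 := (hasDerivAt_d2 hF.d1.d1 hx).congr_deriv (swapC hF hx)
  have h10 := (hasDerivAt_d2 hF.d1 hx).congr_deriv (swap hF hx)
  have h01 := hasDerivAt_d2 hF.d2 hx
  have h00 := hasDerivAt_d2 hF hx
  have hr : HasDerivAt (fun s : ℝ => s / (y₁ - s)) (y₁ / (y₁ - y₂) ^ 2) y₂ := by
    refine ((hasDerivAt_id y₂).div ((hasDerivAt_const y₂ y₁).sub (hasDerivAt_id y₂)) hy).congr_deriv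
      (by simp only [id_eq, Pi.sub_apply]; field_simp <;> ring)
  have key : HasDerivAt (fun s => g1op a c F y₁ s)
      (y₁ * d1 (d1 (d2 F)) y₁ y₂ + (c - y₁) * d1 (d2 F) y₁ y₂
      + 1 / 2 * (y₁ / (y₁ - y₂) ^ 2) * (d1 F y₁ y₂ - d2 F y₁ y₂)
      + 1 / 2 * (y₂ / (y₁ - y₂)) * (d1 (d2 F) y₁ y₂ - d2 (d2 F) y₁ y₂)
      - a * d2 F y₁ y₂) y₂ := by
    refine ((((h20.const_mul y₁).add (h10.const_mul (c - y₁))).add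
      ((hr.const_mul (1 / 2 : ℝ)).mul (h10.sub h01))).sub (h00.const_mul a)).congr_deriv ?_
    simp only [id_eq, Pi.sub_apply, Pi.add_apply, Pi.neg_apply, sub_eq_add_neg]; ring
  exact key.deriv

/-- A2 : d1 (d1 (g2op F)) -/
lemma lA2 (hF : Sm F) (hx : (y₁, y₂) ∈ U) :
    d1 (d1 (g2op a c F)) y₁ y₂ =
      y₂ * d1 (d1 (d2 (d2 F))) y₁ y₂ + (c - y₂) * d1 (d1 (d2 F)) y₁ y₂
      + 1 / 2 * (2 * y₂ / (y₂ - y₁) ^ 3) * (d2 F y₁ y₂ - d1 F y₁ y₂)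
      + 1 / 2 * (y₂ / (y₂ - y₁) ^ 2) * (d1 (d2 F) y₁ y₂ - d1 (d1 F) y₁ y₂)
      + 1 / 2 * (y₂ / (y₂ - y₁) ^ 2) * (d1 (d2 F) y₁ y₂ - d1 (d1 F) y₁ y₂)
      + 1 / 2 * (y₁ / (y₂ - y₁)) * (d1 (d1 (d2 F)) y₁ y₂ - d1 (d1 (d1 F)) y₁ y₂)
      - a * d1 (d1 F) y₁ y₂ := by
  have hy := hx_ne hx
  rw [d1_congr (H := fun u v =>
      v * d1 (d2 (d2 F)) u v + (c - v) * d1 (d2 F) u v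
      + 1 / 2 * (v / (v - u) ^ 2) * (d2 F u v - d1 F u v)
      + 1 / 2 * (u / (v - u)) * (d1 (d2 F) u v - d1 (d1 F) u v)
      - a * d1 F u v) (fun p hp => lA1 a c hF hp) hx]
  have h12 := hasDerivAt_d1 hF.d2.d2.d1 hx
  have h11 := hasDerivAt_d1 hF.d2.d1 hx
  have h20 := hasDerivAt_d1 hF.d1.d1 hx
  have h01 := hasDerivAt_d1 hF.d2 hx
  have h10 := hasDerivAt_d1 hF.d1 hx
  have hr : HasDerivAt (fun t : ℝ => t / (y₂ - t)) (y₂ / (y₂ - y₁) ^ 2) y₁ := by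
    refine ((hasDerivAt_id y₁).div ((hasDerivAt_const y₁ y₂).sub (hasDerivAt_id y₁)) hy).congr_deriv
      (by simp only [id_eq, Pi.sub_apply]; field_simp <;> ring)
  have hr2 : HasDerivAt (fun t : ℝ => y₂ / (y₂ - t) ^ 2) (2 * y₂ / (y₂ - y₁) ^ 3) y₁ := by
    refine ((hasDerivAt_const y₁ y₂).div (((hasDerivAt_const y₁ y₂).sub (hasDerivAt_id y₁)).pow 2)
      (pow_ne_zero 2 hy)).congr_deriv (by simp only [id_eq, Pi.sub_apply, Pi.pow_apply]; field_simp <;> ring)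
  have key : HasDerivAt (fun t =>
      y₂ * d1 (d2 (d2 F)) t y₂ + (c - y₂) * d1 (d2 F) t y₂
      + 1 / 2 * (y₂ / (y₂ - t) ^ 2) * (d2 F t y₂ - d1 F t y₂)
      + 1 / 2 * (t / (y₂ - t)) * (d1 (d2 F) t y₂ - d1 (d1 F) t y₂)
      - a * d1 F t y₂)
      (y₂ * d1 (d1 (d2 (d2 F))) y₁ y₂ + (c - y₂) * d1 (d1 (d2 F)) y₁ y₂
      + 1 / 2 * (2 * y₂ / (y₂ - y₁) ^ 3) * (d2 F y₁ y₂ - d1 F y₁ y₂)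
      + 1 / 2 * (y₂ / (y₂ - y₁) ^ 2) * (d1 (d2 F) y₁ y₂ - d1 (d1 F) y₁ y₂)
      + 1 / 2 * (y₂ / (y₂ - y₁) ^ 2) * (d1 (d2 F) y₁ y₂ - d1 (d1 F) y₁ y₂)
      + 1 / 2 * (y₁ / (y₂ - y₁)) * (d1 (d1 (d2 F)) y₁ y₂ - d1 (d1 (d1 F)) y₁ y₂)
      - a * d1 (d1 F) y₁ y₂) y₁ := by
    refine (((((h12.const_mul y₂).add (h11.const_mul (c - y₂))).add
        ((hr2.const_mul (1 / 2 : ℝ)).mul (h01.sub h10))).add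
      ((hr.const_mul (1 / 2 : ℝ)).mul (h11.sub h20))).sub (h10.const_mul a)).congr_deriv ?_
    simp only [id_eq, Pi.sub_apply, Pi.add_apply, Pi.neg_apply, sub_eq_add_neg]; ring
  exact key.deriv

/-- B2 : d2 (d2 (g1op F)) -/
lemma lB2 (hF : Sm F) (hx : (y₁, y₂) ∈ U) :
    d2 (d2 (g1op a c F)) y₁ y₂ =
      y₁ * d1 (d1 (d2 (d2 F))) y₁ y₂ + (c - y₁) * d1 (d2 (d2 F)) y₁ y₂
      + 1 / 2 * (2 * y₁ / (y₁ - y₂) ^ 3) * (d1 F y₁ y₂ - d2 F y₁ y₂)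
      + 1 / 2 * (y₁ / (y₁ - y₂) ^ 2) * (d1 (d2 F) y₁ y₂ - d2 (d2 F) y₁ y₂)
      + 1 / 2 * (y₁ / (y₁ - y₂) ^ 2) * (d1 (d2 F) y₁ y₂ - d2 (d2 F) y₁ y₂)
      + 1 / 2 * (y₂ / (y₁ - y₂)) * (d1 (d2 (d2 F)) y₁ y₂ - d2 (d2 (d2 F)) y₁ y₂)
      - a * d2 (d2 F) y₁ y₂ := by
  have hy := hx_ne' hx
  rw [d2_congr (H := fun u v =>
      u * d1 (d1 (d2 F)) u v + (c - u) * d1 (d2 F) u v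
      + 1 / 2 * (u / (u - v) ^ 2) * (d1 F u v - d2 F u v)
      + 1 / 2 * (v / (u - v)) * (d1 (d2 F) u v - d2 (d2 F) u v)
      - a * d2 F u v) (fun p hp => lB1 a c hF hp) hx]
  have h21 := (hasDerivAt_d2 hF.d2.d1.d1 hx).congr_deriv (swapD hF hx)
  have h11 := (hasDerivAt_d2 hF.d2.d1 hx).congr_deriv (swap hF.d2 hx)
  have h10 := (hasDerivAt_d2 hF.d1 hx).congr_deriv (swap hF hx)
  have h01 := hasDerivAt_d2 hF.d2 hx
  have h02 := hasDerivAt_d2 hF.d2.d2 hx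
  have hr : HasDerivAt (fun s : ℝ => s / (y₁ - s)) (y₁ / (y₁ - y₂) ^ 2) y₂ := by
    refine ((hasDerivAt_id y₂).div ((hasDerivAt_const y₂ y₁).sub (hasDerivAt_id y₂)) hy).congr_deriv
      (by simp only [id_eq, Pi.sub_apply]; field_simp <;> ring)
  have hr2 : HasDerivAt (fun s : ℝ => y₁ / (y₁ - s) ^ 2) (2 * y₁ / (y₁ - y₂) ^ 3) y₂ := by
    refine ((hasDerivAt_const y₂ y₁).div (((hasDerivAt_const y₂ y₁).sub (hasDerivAt_id y₂)).pow 2)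
      (pow_ne_zero 2 hy)).congr_deriv (by simp only [id_eq, Pi.sub_apply, Pi.pow_apply]; field_simp <;> ring)
  have key : HasDerivAt (fun s =>
      y₁ * d1 (d1 (d2 F)) y₁ s + (c - y₁) * d1 (d2 F) y₁ s
      + 1 / 2 * (y₁ / (y₁ - s) ^ 2) * (d1 F y₁ s - d2 F y₁ s)
      + 1 / 2 * (s / (y₁ - s)) * (d1 (d2 F) y₁ s - d2 (d2 F) y₁ s)
      - a * d2 F y₁ s)
      (y₁ * d1 (d1 (d2 (d2 F))) y₁ y₂ + (c - y₁) * d1 (d2 (d2 F)) y₁ y₂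
      + 1 / 2 * (2 * y₁ / (y₁ - y₂) ^ 3) * (d1 F y₁ y₂ - d2 F y₁ y₂)
      + 1 / 2 * (y₁ / (y₁ - y₂) ^ 2) * (d1 (d2 F) y₁ y₂ - d2 (d2 F) y₁ y₂)
      + 1 / 2 * (y₁ / (y₁ - y₂) ^ 2) * (d1 (d2 F) y₁ y₂ - d2 (d2 F) y₁ y₂)
      + 1 / 2 * (y₂ / (y₁ - y₂)) * (d1 (d2 (d2 F)) y₁ y₂ - d2 (d2 (d2 F)) y₁ y₂)
      - a * d2 (d2 F) y₁ y₂) y₂ := by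
    refine (((((h21.const_mul y₁).add (h11.const_mul (c - y₁))).add
        ((hr2.const_mul (1 / 2 : ℝ)).mul (h10.sub h01))).add
      ((hr.const_mul (1 / 2 : ℝ)).mul (h11.sub h02))).sub (h01.const_mul a)).congr_deriv ?_
    simp only [id_eq, Pi.sub_apply, Pi.add_apply, Pi.neg_apply, sub_eq_add_neg]; ring
  exact key.deriv

end MC


theorem stmt1 (a c : ℝ) (F : ℝ → ℝ → ℝ)
    (hF : ContDiffOn ℝ (⊤ : ℕ∞) (fun p : ℝ × ℝ => F p.1 p.2)
      {p : ℝ × ℝ | p.1 ≠ p.2 ∧ p.1 * p.2 ≠ 0}) :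
    ∀ y₁ y₂ : ℝ, y₁ ≠ y₂ → y₁ * y₂ ≠ 0 →
      g1op a c (g2op a c F) y₁ y₂ - g2op a c (g1op a c F) y₁ y₂
        = -(1 / 2) * ((y₁ + y₂) / (y₁ - y₂) ^ 2)
            * (g1op a c F y₁ y₂ - g2op a c F y₁ y₂) := by
  intro y₁ y₂ h1 h2
  have hx : (y₁, y₂) ∈ MC.U := ⟨h1, h2⟩
  have hF' : MC.Sm F := hF
  have h12 : y₁ - y₂ ≠ 0 := sub_ne_zero.2 h1
  have h21 : y₂ - y₁ ≠ 0 := sub_ne_zero.2 (Ne.symm h1)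
  have E1 : g1op a c (g2op a c F) y₁ y₂ =
      y₁ * d1 (d1 (g2op a c F)) y₁ y₂ + (c - y₁) * d1 (g2op a c F) y₁ y₂
      + 1 / 2 * (y₂ / (y₁ - y₂)) * (d1 (g2op a c F) y₁ y₂ - d2 (g2op a c F) y₁ y₂)
      - a * g2op a c F y₁ y₂ := rfl
  have E2 : g2op a c (g1op a c F) y₁ y₂ =
      y₂ * d2 (d2 (g1op a c F)) y₁ y₂ + (c - y₂) * d2 (g1op a c F) y₁ y₂
      + 1 / 2 * (y₁ / (y₂ - y₁)) * (d2 (g1op a c F) y₁ y₂ - d1 (g1op a c F) y₁ y₂)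
      - a * g1op a c F y₁ y₂ := rfl
  have V1 : g1op a c F y₁ y₂ =
      y₁ * d1 (d1 F) y₁ y₂ + (c - y₁) * d1 F y₁ y₂
      + 1 / 2 * (y₂ / (y₁ - y₂)) * (d1 F y₁ y₂ - d2 F y₁ y₂) - a * F y₁ y₂ := rfl
  have V2 : g2op a c F y₁ y₂ =
      y₂ * d2 (d2 F) y₁ y₂ + (c - y₂) * d2 F y₁ y₂
      + 1 / 2 * (y₁ / (y₂ - y₁)) * (d2 F y₁ y₂ - d1 F y₁ y₂) - a * F y₁ y₂ := rfl
  rw [E1, E2, MC.lA1 a c hF' hx, MC.lA2 a c hF' hx, MC.lA3 a c hF' hx,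
    MC.lB1 a c hF' hx, MC.lB2 a c hF' hx, MC.lB3 a c hF' hx, V1, V2]
  generalize d1 (d1 (d2 (d2 F))) y₁ y₂ = X22
  generalize d1 (d1 (d2 F)) y₁ y₂ = X21
  generalize d1 (d1 (d1 F)) y₁ y₂ = X30
  generalize d1 (d2 (d2 F)) y₁ y₂ = X12
  generalize d2 (d2 (d2 F)) y₁ y₂ = X03
  generalize d1 (d1 F) y₁ y₂ = X20
  generalize d1 (d2 F) y₁ y₂ = X11
  generalize d2 (d2 F) y₁ y₂ = X02
  generalize d1 F y₁ y₂ = X10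
  generalize d2 F y₁ y₂ = X01
  generalize F y₁ y₂ = X00
  simp only [div_eq_mul_inv]
  rw [show (y₁ - y₂ : ℝ) = -(y₂ - y₁) by ring]
  rw [show (-(y₂ - y₁) : ℝ) ^ 3 = -((y₂ - y₁) ^ 3) by ring]
  simp only [inv_neg, neg_sq, ← inv_pow, mul_neg, neg_mul, neg_neg]
  have hv : (y₂ - y₁) * (y₂ - y₁)⁻¹ = 1 := mul_inv_cancel₀ h21
  generalize hvg : (y₂ - y₁)⁻¹ = v
  rw [hvg] at hv
  linear_combination (1 / 2 * (y₂ * (X01 - X02) + y₁ * (X10 - X20)) * v) * hv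
end

section
/- Let $F$ be a smooth symmetric function on $\{(y_1,y_2) : y_1 y_2 \neq 0\}$ satisfying, whenever $y_1 \neq y_2$, the equation $y_1\partial_1^2 F + (c-y_1)\partial_1 F + \frac{1}{2}\frac{y_2}{y_1-y_2}(\partial_1 F - \partial_2 F) - aF = 0$. Then at any diagonal point $(y,y)$ with $y \neq 0$, $F$ satisfies $\frac{3}{2}y\,\partial_1^2 F(y,y) + (c-y)\,\partial_1 F(y,y) - \frac{y}{2}\,\partial_1\partial_2 F(y,y) - a\,F(y,y) = 0$. -/
open Filter Topology


theorem stmt7 (a c : ℝ) (F : ℝ → ℝ → ℝ)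
    (hF : ContDiffOn ℝ (⊤ : ℕ∞) (fun p : ℝ × ℝ => F p.1 p.2) {p : ℝ × ℝ | p.1 * p.2 ≠ 0})
    (hsym : ∀ y₁ y₂, F y₁ y₂ = F y₂ y₁)
    (heq : ∀ y₁ y₂ : ℝ, y₁ * y₂ ≠ 0 → y₁ ≠ y₂ →
      y₁ * d1 (d1 F) y₁ y₂ + (c - y₁) * d1 F y₁ y₂
        + 1 / 2 * (y₂ / (y₁ - y₂)) * (d1 F y₁ y₂ - d2 F y₁ y₂) - a * F y₁ y₂ = 0) :
    ∀ y : ℝ, y ≠ 0 →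
      3 / 2 * y * d1 (d1 F) y y + (c - y) * d1 F y y
        - y / 2 * d1 (d2 F) y y - a * F y y = 0 := by
  intro y hy
  set s : Set (ℝ × ℝ) := {p : ℝ × ℝ | p.1 * p.2 ≠ 0} with hs_def
  have hs : IsOpen s := isOpen_ne.preimage (continuous_fst.mul continuous_snd)
  set f : ℝ × ℝ → ℝ := fun p => F p.1 p.2 with hf_def
  have hf : ContDiffOn ℝ (⊤ : ℕ∞) f s := hF
  set h : ℝ × ℝ → ℝ := fun p => fderiv ℝ f p (1, 0) with hh_def
  have hfd : ContDiffOn ℝ (⊤ : ℕ∞) (fun p => fderiv ℝ f p) s := hf.fderiv_of_isOpen hs (by simp)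
  have hh : ContDiffOn ℝ (⊤ : ℕ∞) h s := hfd.clm_apply contDiffOn_const
  have hhfd : ContDiffOn ℝ (⊤ : ℕ∞) (fun p => fderiv ℝ h p) s := hh.fderiv_of_isOpen hs (by simp)
  -- membership facts
  have hyy : ((y, y) : ℝ × ℝ) ∈ s := by simp [hs_def, hy]
  -- key derivative facts
  have hdiff_f : ∀ p ∈ s, DifferentiableAt ℝ f p := fun p hp =>
    (hf.contDiffAt (hs.mem_nhds hp)).differentiableAt (by simp)
  have hdiff_h : ∀ p ∈ s, DifferentiableAt ℝ h p := fun p hp =>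
    (hh.contDiffAt (hs.mem_nhds hp)).differentiableAt (by simp)
  have curve1 : ∀ u v : ℝ, HasDerivAt (fun t : ℝ => ((t, v) : ℝ × ℝ)) (1, 0) u :=
    fun u v => (hasDerivAt_id u).prodMk (hasDerivAt_const u v)
  have curve2 : ∀ u v : ℝ, HasDerivAt (fun t : ℝ => ((u, t) : ℝ × ℝ)) (0, 1) v :=
    fun u v => (hasDerivAt_const v u).prodMk (hasDerivAt_id v)
  have key1 : ∀ p : ℝ × ℝ, p ∈ s → HasDerivAt (fun t => F t p.2) (h p) p.1 := by
    intro p hp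
    have hd := (hdiff_f p hp).hasFDerivAt
    have := hd.comp_hasDerivAt_of_eq p.1 (curve1 p.1 p.2) rfl
    exact this
  have key2 : ∀ p : ℝ × ℝ, p ∈ s →
      HasDerivAt (fun t => h (t, p.2)) (fderiv ℝ h p (1, 0)) p.1 := by
    intro p hp
    have hd := (hdiff_h p hp).hasFDerivAt
    have := hd.comp_hasDerivAt_of_eq p.1 (curve1 p.1 p.2) rfl
    exact this
  have key3 : ∀ p : ℝ × ℝ, p ∈ s →
      HasDerivAt (fun t => h (p.1, t)) (fderiv ℝ h p (0, 1)) p.2 := by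
    intro p hp
    have hd := (hdiff_h p hp).hasFDerivAt
    have := hd.comp_hasDerivAt_of_eq p.2 (curve2 p.1 p.2) rfl
    exact this
  have hmem : ∀ t : ℝ, t ≠ 0 → ((t, y) : ℝ × ℝ) ∈ s := by
    intro t ht; simp [hs_def, ht, hy]
  have hmem' : ∀ t : ℝ, t ≠ 0 → ((y, t) : ℝ × ℝ) ∈ s := by
    intro t ht; simp [hs_def, ht, hy]
  -- expressing d1, d2 in terms of h
  have hd1 : ∀ t : ℝ, t ≠ 0 → d1 F t y = h (t, y) := fun t ht =>
    (key1 (t, y) (hmem t ht)).deriv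
  have hd1' : ∀ t : ℝ, t ≠ 0 → d1 F y t = h (y, t) := fun t ht =>
    (key1 (y, t) (hmem' t ht)).deriv
  have hd2d1 : ∀ y₁ y₂ : ℝ, d2 F y₁ y₂ = d1 F y₂ y₁ := by
    intro y₁ y₂
    have : (fun t => F y₁ t) = fun t => F t y₁ := funext fun t => hsym y₁ t
    simp only [d1, d2, this]
  have hd2 : ∀ t : ℝ, t ≠ 0 → d2 F t y = h (y, t) := by
    intro t ht; rw [hd2d1, hd1' t ht]
  have hd11 : ∀ t : ℝ, t ≠ 0 → d1 (d1 F) t y = fderiv ℝ h (t, y) (1, 0) := by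
    intro t ht
    have hev : (fun u => d1 F u y) =ᶠ[𝓝 t] fun u => h (u, y) := by
      filter_upwards [eventually_ne_nhds ht] with u hu using hd1 u hu
    have : d1 (d1 F) t y = deriv (fun u => h (u, y)) t := by
      simp only [d1]; exact hev.deriv_eq
    rw [this]
    exact (key2 (t, y) (hmem t ht)).deriv
  have hd12 : d1 (d2 F) y y = fderiv ℝ h (y, y) (0, 1) := by
    have hev : (fun t => d2 F t y) =ᶠ[𝓝 y] fun t => h (y, t) := by
      filter_upwards [eventually_ne_nhds hy] with u hu using hd2 u hu
    have : d1 (d2 F) y y = deriv (fun t => h (y, t)) y := by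
      simp only [d1]; exact hev.deriv_eq
    rw [this]
    exact (key3 (y, y) hyy).deriv
  set A : ℝ := fderiv ℝ h (y, y) (1, 0) with hA
  set B : ℝ := fderiv ℝ h (y, y) (0, 1) with hB
  -- the limiting function
  set φ : ℝ → ℝ := fun t => t * fderiv ℝ h (t, y) (1, 0) + (c - t) * h (t, y)
      + 1 / 2 * (y / (t - y)) * (h (t, y) - h (y, t)) - a * F t y with hφ
  have hev0 : ∀ᶠ t in 𝓝[≠] y, φ t = 0 := by
    filter_upwards [(eventually_ne_nhds hy).filter_mono nhdsWithin_le_nhds,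
      self_mem_nhdsWithin] with t ht0 htne
    have := heq t y (mul_ne_zero ht0 hy) htne
    rw [hd1 t ht0, hd2 t ht0, hd11 t ht0] at this
    simpa [hφ, hf_def] using this
  -- limits of the pieces
  have hc1 : ContinuousAt (fun t : ℝ => ((t, y) : ℝ × ℝ)) y :=
    (continuous_id.prodMk continuous_const).continuousAt
  have hc2 : ContinuousAt (fun t : ℝ => ((y, t) : ℝ × ℝ)) y :=
    (continuous_const.prodMk continuous_id).continuousAt
  have hHcont : ContinuousAt (fun t : ℝ => fderiv ℝ h (t, y) (1, 0)) y := by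
    have h1 : ContinuousAt (fun p : ℝ × ℝ => fderiv ℝ h p) (y, y) :=
      hhfd.continuousOn.continuousAt (hs.mem_nhds hyy)
    have h1c : ContinuousAt ((fun p : ℝ × ℝ => fderiv ℝ h p) ∘ fun t : ℝ => (t, y)) y :=
      ContinuousAt.comp (f := fun t : ℝ => ((t, y) : ℝ × ℝ)) h1 hc1
    have h2c : ContinuousAt ((fun L : (ℝ × ℝ) →L[ℝ] ℝ => L (1, 0)) ∘
        ((fun p : ℝ × ℝ => fderiv ℝ h p) ∘ fun t : ℝ => (t, y))) y :=
      ContinuousAt.comp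
        ((ContinuousLinearMap.apply ℝ ℝ (((1 : ℝ), (0 : ℝ)) : ℝ × ℝ)).continuous.continuousAt)
        h1c
    exact h2c
  have hhcont1 : ContinuousAt (fun t : ℝ => h (t, y)) y := by
    have h1 : ContinuousAt (h ∘ fun t : ℝ => (t, y)) y :=
      ContinuousAt.comp (f := fun t : ℝ => ((t, y) : ℝ × ℝ))
        (hh.continuousOn.continuousAt (hs.mem_nhds hyy)) hc1
    exact h1
  have hFcont : ContinuousAt (fun t : ℝ => F t y) y := by
    have h1 : ContinuousAt (f ∘ fun t : ℝ => (t, y)) y :=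
      ContinuousAt.comp (f := fun t : ℝ => ((t, y) : ℝ × ℝ))
        (hf.continuousOn.continuousAt (hs.mem_nhds hyy)) hc1
    exact h1
  -- slope limit
  have hg : HasDerivAt (fun t => h (t, y) - h (y, t)) (A - B) y :=
    (key2 (y, y) hyy).sub (key3 (y, y) hyy)
  have hslope : Filter.Tendsto (fun t => (h (t, y) - h (y, t)) / (t - y)) (𝓝[≠] y)
      (𝓝 (A - B)) := by
    have := hasDerivAt_iff_tendsto_slope.1 hg
    refine this.congr' ?_
    filter_upwards [self_mem_nhdsWithin] with t ht
    simp only [slope_def_field]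
    ring
  have hT : Filter.Tendsto φ (𝓝[≠] y)
      (𝓝 (y * A + (c - y) * h (y, y) + 1 / 2 * y * (A - B) - a * F y y)) := by
    have t1 : Filter.Tendsto (fun t : ℝ => t * fderiv ℝ h (t, y) (1, 0)) (𝓝[≠] y)
        (𝓝 (y * A)) := (continuousAt_id.mul hHcont).tendsto.mono_left nhdsWithin_le_nhds
    have t2 : Filter.Tendsto (fun t : ℝ => (c - t) * h (t, y)) (𝓝[≠] y)
        (𝓝 ((c - y) * h (y, y))) :=
      ((continuousAt_const.sub continuousAt_id).mul hhcont1).tendsto.mono_left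
        nhdsWithin_le_nhds
    have t3 : Filter.Tendsto (fun t : ℝ => a * F t y) (𝓝[≠] y) (𝓝 (a * F y y)) :=
      (continuousAt_const.mul hFcont).tendsto.mono_left nhdsWithin_le_nhds
    have t4 : Filter.Tendsto (fun t : ℝ => 1 / 2 * (y / (t - y)) * (h (t, y) - h (y, t)))
        (𝓝[≠] y) (𝓝 (1 / 2 * y * (A - B))) := by
      have h2 := hslope.const_mul (1 / 2 * y)
      exact h2.congr fun t => by ring
    exact ((t1.add t2).add t4).sub t3
  have hL : y * A + (c - y) * h (y, y) + 1 / 2 * y * (A - B) - a * F y y = 0 := by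
    have hev0' : φ =ᶠ[𝓝[≠] y] fun _ => (0 : ℝ) := hev0
    have h0 : Filter.Tendsto φ (𝓝[≠] y) (𝓝 0) :=
      Filter.Tendsto.congr' hev0'.symm tendsto_const_nhds
    exact tendsto_nhds_unique hT h0
  rw [hd11 y hy, hd1 y hy, hd12]
  have hf0 : F y y = f (y, y) := rfl
  linarith [hL]
end

section
/- Let $\tau = (t,\dots,t)$ ($l$ copies of $t$) be a rectangular partition contained in a partition $\lambda$ (meaning $\lambda$ has at least $l$ parts each $\geq t$). Let $M_\lambda(y_1,\dots,y_m)$ be the monomial symmetric polynomial. Then $\partial_1^t\partial_2^t\cdots\partial_l^t\, M_\lambda(y) = \sum_{(\kappa,\nu)} \frac{\kappa!}{(\kappa-\tau)!}\, M_{\kappa-\tau}(y_1,\dots,y_l)\, M_\nu(y_{l+1},\dots,y_m)$, where the sum is over pairs of partitions $(\kappa,\nu)$ whose concatenation-and-sort equals $\lambda$, with $\kappa$ having at most $l$ parts each $\geq t$; here $\gamma! = \prod_i \gamma_i!$ and $\kappa - \tau = (\kappa_1 - t,\dots,\kappa_l - t)$. -/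
/-- The monomial symmetric polynomial `M_λ` in `m` variables, as a function:
the sum of `y^α` over the distinct permutations `α` of the partition `λ`
(given as a multiset of parts) padded with zeros to length `m`. -/
noncomputable def msymm (m : ℕ) (lam : Multiset ℕ) (y : Fin m → ℝ) : ℝ :=
  ∑ α ∈ Finset.image
      (fun σ : Equiv.Perm (Fin m) => fun i : Fin m =>
        (lam.toList ++ List.replicate (m - Multiset.card lam) 0).getD (σ i : ℕ) 0)
      Finset.univ,
    ∏ i, y i ^ α i

/-- The partial derivative in the `i`-th coordinate of a function of `m` real variables. -/
noncomputable def pd {m : ℕ} (i : Fin m) (f : (Fin m → ℝ) → ℝ) : (Fin m → ℝ) → ℝ :=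
  fun y => deriv (fun s => f (Function.update y i s)) (y i)

/-!
Write `M_λ` as the sum of the monomials `y^α` over the rearrangements `α` of `λ` padded with
zeros. Applying `∂_i^t` to `y^α` multiplies it by the falling factorial
`α_i (α_i - 1) ⋯ (α_i - t + 1)` and lowers `α_i` by `t`, so only the `α` with `α_i ≥ t` for all
`i ≤ l` survive. Since `t ≥ 1`, the head `(α_1, …, α_l)` of a surviving `α` contains no padding
zero, so it is a rearrangement of a sub-multiset `κ ≤ λ` with `l` parts, all `≥ t`, and its tail
is a rearrangement of `λ - κ` padded with zeros. Grouping the surviving `α` by `κ`, the lowered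
heads run over the rearrangements of `κ - τ` and the tails over those of `λ - κ`, independently,
and the coefficient is `∏ κ_i! / (κ_i - t)!`.
-/

section Split

variable {m l : ℕ} (hl : l ≤ m) {X : Type*}

def tailPart (v : Fin m → X) : Fin (m - l) → X :=
  fun j => v ⟨l + j, by have := j.isLt; omega⟩

def joinFn (β : Fin l → X) (γ : Fin (m - l) → X) : Fin m → X :=
  fun j => if h : (j : ℕ) < l then β ⟨j, h⟩ else γ ⟨j - l, by have := j.isLt; omega⟩

variable {hl}

@[simp]
lemma take_joinFn (β : Fin l → X) (γ : Fin (m - l) → X) :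
    Fin.take l hl (joinFn hl β γ) = β := by
  funext i
  simp [joinFn]

@[simp]
lemma tailPart_joinFn (β : Fin l → X) (γ : Fin (m - l) → X) :
    tailPart hl (joinFn hl β γ) = γ := by
  funext j
  simp [tailPart, joinFn]

@[simp]
lemma joinFn_take_tailPart (v : Fin m → X) :
    joinFn hl (Fin.take l hl v) (tailPart hl v) = v := by
  funext j
  by_cases h : (j : ℕ) < l
  · simp [joinFn, h]
  · simp only [joinFn, h, dite_false, tailPart]
    congr 1
    ext
    simp only
    omega

variable (hl)

lemma coe_ofFn_eq_add (v : Fin m → X) :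
    (List.ofFn v : Multiset X) = List.ofFn (Fin.take l hl v) + List.ofFn (tailPart hl v) := by
  have hm : m = l + (m - l) := by omega
  rw [List.ofFn_congr hm v, List.ofFn_add, ← Multiset.coe_add]
  rfl

lemma prod_eq_prod_take_mul_prod_tailPart {M : Type*} [CommMonoid M] (f : Fin m → M) :
    ∏ j, f j = (∏ i, Fin.take l hl f i) * ∏ j, tailPart hl f j := by
  simp only [Finset.prod_eq_multiset_prod, Fin.univ_val_map, coe_ofFn_eq_add hl f,
    Multiset.prod_add]

end Split

def monomialFn {m : ℕ} (α : Fin m → ℕ) (y : Fin m → ℝ) : ℝ := ∏ i, y i ^ α i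

lemma monomialFn_joinFn {m l : ℕ} (hl : l ≤ m) (β : Fin l → ℕ) (γ : Fin (m - l) → ℕ)
    (y : Fin m → ℝ) :
    monomialFn (joinFn hl β γ) y
      = monomialFn β (Fin.take l hl y) * monomialFn γ (tailPart hl y) := by
  have hβ := congrFun (take_joinFn (hl := hl) β γ)
  have hγ := congrFun (tailPart_joinFn (hl := hl) β γ)
  simp only [Fin.take_apply, tailPart] at hβ hγ
  simp only [monomialFn, prod_eq_prod_take_mul_prod_tailPart hl, Fin.take_apply, tailPart, hβ, hγ]

section Derivatives

variable {m : ℕ}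

lemma monomialFn_update_update (α : Fin m → ℕ) (y : Fin m → ℝ) (i : Fin m) (n : ℕ) (s : ℝ) :
    monomialFn (Function.update α i n) (Function.update y i s)
      = s ^ n * ∏ j ∈ Finset.univ.erase i, y j ^ α j := by
  rw [monomialFn, ← Finset.mul_prod_erase _ _ (Finset.mem_univ i)]
  simp only [Function.update_self]
  congr 1
  refine Finset.prod_congr rfl fun j hj => ?_
  have hji := Finset.ne_of_mem_erase hj
  rw [Function.update_of_ne hji, Function.update_of_ne hji]

lemma pd_sum_monomialFn {ι : Type*} (A : Finset ι) (c : ι → ℝ) (e : ι → Fin m → ℕ) (i : Fin m) :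
    pd i (fun y => ∑ a ∈ A, c a * monomialFn (e a) y)
      = fun y => ∑ a ∈ A, (c a * e a i) * monomialFn (Function.update (e a) i (e a i - 1)) y := by
  funext y
  have hupd (a : ι) (s : ℝ) : monomialFn (e a) (Function.update y i s)
      = s ^ e a i * ∏ j ∈ Finset.univ.erase i, y j ^ e a j := by
    simpa using monomialFn_update_update (e a) y i (e a i) s
  have hlow (a : ι) : monomialFn (Function.update (e a) i (e a i - 1)) y
      = y i ^ (e a i - 1) * ∏ j ∈ Finset.univ.erase i, y j ^ e a j := by
    simpa using monomialFn_update_update (e a) y i (e a i - 1) (y i)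
  simp only [pd, hupd, hlow]
  rw [deriv_fun_sum (fun a _ => by fun_prop)]
  refine Finset.sum_congr rfl fun a _ => ?_
  rw [deriv_const_mul_field, deriv_mul_const_field, deriv_pow_field]
  ring

lemma pd_iterate_sum_monomialFn {ι : Type*} (A : Finset ι) (c : ι → ℝ) (e : ι → Fin m → ℕ)
    (i : Fin m) (t : ℕ) :
    (pd i)^[t] (fun y => ∑ a ∈ A, c a * monomialFn (e a) y)
      = fun y => ∑ a ∈ A, (c a * (e a i).descFactorial t)
          * monomialFn (Function.update (e a) i (e a i - t)) y := by
  induction t with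
  | zero => simp
  | succ t ih =>
    rw [Function.iterate_succ_apply', ih, pd_sum_monomialFn]
    funext y
    refine Finset.sum_congr rfl fun a _ => ?_
    rw [Function.update_idem, Function.update_self, Nat.sub_sub, Nat.descFactorial_succ]
    push_cast
    ring

lemma foldr_pd_iterate_sum_monomialFn {ι : Type*} (t : ℕ) {L : List (Fin m)} (hL : L.Nodup)
    (A : Finset ι) (c : ι → ℝ) (e : ι → Fin m → ℕ) :
    L.foldr (fun i g => (pd i)^[t] ∘ g) id (fun y => ∑ a ∈ A, c a * monomialFn (e a) y)
      = fun y => ∑ a ∈ A, (c a * (L.map fun i => ((e a i).descFactorial t : ℝ)).prod)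
          * monomialFn (fun j => if j ∈ L then e a j - t else e a j) y := by
  induction L with
  | nil => simp
  | cons i L ih =>
    obtain ⟨hi, hL⟩ := List.nodup_cons.1 hL
    rw [List.foldr_cons, Function.comp_apply, ih hL, pd_iterate_sum_monomialFn]
    funext y
    refine Finset.sum_congr rfl fun a _ => ?_
    congr 1
    · simp only [hi, if_false, List.map_cons, List.prod_cons]
      ring
    · congr 1
      funext j
      by_cases hj : j = i
      · subst hj
        simp [hi]
      · simp [hj]

end Derivatives

lemma exists_perm_eq_comp_of_perm_ofFn {α : Type*} [LinearOrder α] {n : ℕ} {f g : Fin n → α}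
    (h : (List.ofFn f).Perm (List.ofFn g)) : ∃ σ : Equiv.Perm (Fin n), f = g ∘ σ := by
  -- `f` and `g` become the same tuple once each is sorted
  have hsorted : f ∘ Tuple.sort f = g ∘ Tuple.sort g :=
    List.ofFn_injective <|
      (((Tuple.sort f).ofFn_comp_perm f).trans (h.trans ((Tuple.sort g).ofFn_comp_perm g).symm)
        ).eq_of_pairwise' (Tuple.monotone_sort f).sortedLE_ofFn.pairwise
          (Tuple.monotone_sort g).sortedLE_ofFn.pairwise
  refine ⟨(Tuple.sort f).symm.trans (Tuple.sort g), ?_⟩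
  ext i
  simpa using congrFun hsorted ((Tuple.sort f).symm i)

def paddedParts (m : ℕ) (lam : Multiset ℕ) : Multiset ℕ :=
  lam + Multiset.replicate (m - Multiset.card lam) 0

noncomputable def exponents (m : ℕ) (lam : Multiset ℕ) : Finset (Fin m → ℕ) :=
  Finset.image
    (fun σ : Equiv.Perm (Fin m) => fun i : Fin m =>
      (lam.toList ++ List.replicate (m - Multiset.card lam) 0).getD (σ i : ℕ) 0)
    Finset.univ

lemma msymm_eq_sum_exponents (m : ℕ) (lam : Multiset ℕ) (y : Fin m → ℝ) :
    msymm m lam y = ∑ α ∈ exponents m lam, monomialFn α y := rfl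

lemma mem_exponents_iff {m : ℕ} {lam : Multiset ℕ} (hcard : Multiset.card lam ≤ m)
    (α : Fin m → ℕ) :
    α ∈ exponents m lam ↔ (List.ofFn α : Multiset ℕ) = paddedParts m lam := by
  rw [exponents, Finset.mem_image]
  set p := lam.toList ++ List.replicate (m - Multiset.card lam) 0
  have hlen : p.length = m := by
    simp only [p, List.length_append, Multiset.length_toList, List.length_replicate]
    omega
  have hp : (p : Multiset ℕ) = paddedParts m lam := by
    simp only [p, paddedParts, ← Multiset.coe_add, Multiset.coe_toList, ← Multiset.coe_replicate]
  let g : Fin m → ℕ := fun i => p.get (Fin.cast hlen.symm i)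
  have hg : List.ofFn g = p := by rw [← List.ofFn_congr hlen p.get, List.ofFn_get]
  have hgetD (σ : Equiv.Perm (Fin m)) :
      (fun i : Fin m => p.getD (σ i : ℕ) 0) = g ∘ σ := by
    funext i
    have hi : (σ i : ℕ) < p.length := by rw [hlen]; exact (σ i).isLt
    simp [g, List.getElem?_eq_getElem hi]
  rw [← hp, Multiset.coe_eq_coe]
  simp only [Finset.mem_univ, true_and, hgetD]
  constructor
  · rintro ⟨σ, rfl⟩
    rw [← hg]
    exact σ.ofFn_comp_perm g
  · intro h
    obtain ⟨σ, hσ⟩ := exists_perm_eq_comp_of_perm_ofFn (h.trans (List.Perm.of_eq hg.symm))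
    exact ⟨σ, hσ.symm⟩

lemma paddedParts_eq_add {m : ℕ} {κ lam : Multiset ℕ} (hκ : κ ≤ lam) :
    paddedParts m lam = κ + paddedParts (m - Multiset.card κ) (lam - κ) := by
  have hcard := Multiset.card_le_card hκ
  rw [paddedParts, paddedParts, Multiset.card_sub hκ, Nat.sub_sub_sub_cancel_right hcard,
    ← add_assoc, add_tsub_cancel_of_le hκ]

lemma le_of_le_paddedParts {m : ℕ} {κ lam : Multiset ℕ} (h : κ ≤ paddedParts m lam)
    (h0 : 0 ∉ κ) : κ ≤ lam := by
  rw [Multiset.le_iff_count] at h ⊢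
  intro x
  rcases eq_or_ne x 0 with rfl | hx
  · simp [Multiset.count_eq_zero_of_notMem h0]
  · simpa [paddedParts, Multiset.count_replicate, Ne.symm hx] using h x

section Fibers

variable {m l t : ℕ} (hl : l ≤ m) {κ lam : Multiset ℕ}

lemma le_of_coe_ofFn_eq {β : Fin l → ℕ} (hβ : (List.ofFn β : Multiset ℕ) = κ)
    (hκ : ∀ x ∈ κ, t ≤ x) (i : Fin l) : t ≤ β i :=
  hκ _ (hβ ▸ by simp)

lemma coe_ofFn_eq_map_sub_iff (hκ : ∀ x ∈ κ, t ≤ x) (β : Fin l → ℕ) :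
    (List.ofFn β : Multiset ℕ) = κ.map (· - t)
      ↔ (List.ofFn (fun i => β i + t) : Multiset ℕ) = κ := by
  have hcancel : (κ.map (· - t)).map (· + t) = κ := by
    rw [Multiset.map_map]
    exact (Multiset.map_congr rfl fun x hx => Nat.sub_add_cancel (hκ x hx)).trans κ.map_id'
  constructor
  · intro h
    rw [← hcancel, ← h, Multiset.map_coe, List.map_ofFn]
    rfl
  · intro h
    rw [← h, Multiset.map_coe, List.map_ofFn]
    simp [Function.comp_def]

lemma prod_descFactorial_eq_div {β : Fin l → ℕ} (hβ : (List.ofFn β : Multiset ℕ) = κ)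
    (hκ : ∀ x ∈ κ, t ≤ x) :
    ∏ i, ((β i).descFactorial t : ℝ)
      = ((κ.map Nat.factorial).prod : ℝ) / ((κ.map fun x => Nat.factorial (x - t)).prod : ℝ) := by
  subst hβ
  simp only [Multiset.map_coe, List.map_ofFn, Multiset.prod_coe, List.prod_ofFn, Nat.cast_prod,
    ← Finset.prod_div_distrib]
  refine Finset.prod_congr rfl fun i _ => ?_
  rw [eq_div_iff (by simp [Nat.factorial_ne_zero]), Function.comp_apply, Function.comp_apply,
    ← Nat.factorial_mul_descFactorial (le_of_coe_ofFn_eq rfl hκ i)]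
  push_cast
  ring

lemma coe_ofFn_take_le (ht : 1 ≤ t) {α : Fin m → ℕ} (hα : α ∈ exponents m lam)
    (hcard : Multiset.card lam ≤ m) (hge : ∀ i, t ≤ Fin.take l hl α i) :
    (List.ofFn (Fin.take l hl α) : Multiset ℕ) ≤ lam := by
  refine le_of_le_paddedParts (m := m) ?_ fun h0 => ?_
  · rw [← (mem_exponents_iff hcard α).1 hα, coe_ofFn_eq_add hl]
    exact Multiset.le_add_right _ _
  · obtain ⟨i, hi⟩ := List.mem_ofFn.1 (Multiset.mem_coe.1 h0)
    have := hge i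
    omega

lemma mem_exponents_iff_tailPart_mem (hcard : Multiset.card lam ≤ m) (hκ : κ ≤ lam)
    {α : Fin m → ℕ} (htake : (List.ofFn (Fin.take l hl α) : Multiset ℕ) = κ) :
    α ∈ exponents m lam ↔ tailPart hl α ∈ exponents (m - l) (lam - κ) := by
  have hκcard : Multiset.card κ = l := by simp [← htake]
  have hsub : Multiset.card (lam - κ) ≤ m - l := by
    rw [Multiset.card_sub hκ]
    omega
  rw [mem_exponents_iff hcard, mem_exponents_iff hsub, coe_ofFn_eq_add hl, htake,
    paddedParts_eq_add hκ, hκcard, add_right_inj]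

lemma msymm_mul_msymm (A B : Multiset ℕ) (y : Fin m → ℝ) :
    msymm l A (fun i => y (Fin.castLE hl i))
        * msymm (m - l) B (fun j => y ⟨l + j, by have := j.isLt; omega⟩)
      = ∑ p ∈ exponents l A ×ˢ exponents (m - l) B, monomialFn (joinFn hl p.1 p.2) y := by
  simp only [msymm_eq_sum_exponents, Finset.sum_mul_sum, Finset.sum_product, monomialFn_joinFn]
  rfl

lemma sum_fiber_eq_sum_product (hcard : Multiset.card lam ≤ m) (hκ : κ ≤ lam)
    (hκl : Multiset.card κ = l) (hκt : ∀ x ∈ κ, t ≤ x) (y : Fin m → ℝ) :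
    ∑ α ∈ exponents m lam with (List.ofFn (Fin.take l hl α) : Multiset ℕ) = κ,
        monomialFn (joinFn hl (fun i => Fin.take l hl α i - t) (tailPart hl α)) y
      = ∑ p ∈ exponents l (κ.map (· - t)) ×ˢ exponents (m - l) (lam - κ),
          monomialFn (joinFn hl p.1 p.2) y := by
  have hmem (β : Fin l → ℕ) :
      β ∈ exponents l (κ.map (· - t)) ↔ (List.ofFn β : Multiset ℕ) = κ.map (· - t) := by
    rw [mem_exponents_iff (by simp [hκl])]
    simp [paddedParts, hκl]
  have hcancel {α : Fin m → ℕ} (htake : (List.ofFn (Fin.take l hl α) : Multiset ℕ) = κ) :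
      (fun i => Fin.take l hl α i - t + t) = Fin.take l hl α :=
    funext fun i => Nat.sub_add_cancel (le_of_coe_ofFn_eq htake hκt i)
  refine Finset.sum_nbij' (fun α => (fun i => Fin.take l hl α i - t, tailPart hl α))
    (fun p => joinFn hl (fun i => p.1 i + t) p.2) ?_ ?_ ?_ ?_ fun _ _ => rfl
  · intro α hα
    obtain ⟨hαE, htake⟩ := Finset.mem_filter.1 hα
    refine Finset.mem_product.2 ⟨(hmem _).2 ?_, ?_⟩
    · rw [coe_ofFn_eq_map_sub_iff hκt, hcancel htake, htake]
    · exact (mem_exponents_iff_tailPart_mem hl hcard hκ htake).1 hαE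
  · rintro ⟨β, γ⟩ hp
    obtain ⟨hβ, hγ⟩ := Finset.mem_product.1 hp
    have htake : (List.ofFn (Fin.take l hl (joinFn hl (fun i => β i + t) γ)) : Multiset ℕ) = κ := by
      rw [take_joinFn, ← coe_ofFn_eq_map_sub_iff hκt, ← hmem]
      exact hβ
    refine Finset.mem_filter.2 ⟨?_, htake⟩
    rw [mem_exponents_iff_tailPart_mem hl hcard hκ htake, tailPart_joinFn]
    exact hγ
  · intro α hα
    simp only [hcancel (Finset.mem_filter.1 hα).2, joinFn_take_tailPart]
  · rintro ⟨β, γ⟩ -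
    simp only [take_joinFn, tailPart_joinFn, Nat.add_sub_cancel]

lemma foldr_pd_iterate_msymm (t : ℕ) (lam : Multiset ℕ) :
    ((List.finRange l).foldr (fun i g => (pd (Fin.castLE hl i))^[t] ∘ g) id) (msymm m lam)
      = fun y => ∑ α ∈ exponents m lam, (∏ i, ((Fin.take l hl α i).descFactorial t : ℝ))
          * monomialFn (joinFn hl (fun i => Fin.take l hl α i - t) (tailPart hl α)) y := by
  have hL : ((List.finRange l).map (Fin.castLE hl)).Nodup :=
    (List.nodup_finRange l).map (Fin.castLE_injective hl)
  have hmem (j : Fin m) : j ∈ (List.finRange l).map (Fin.castLE hl) ↔ (j : ℕ) < l :=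
    ⟨fun hj => by obtain ⟨i, -, rfl⟩ := List.mem_map.1 hj; exact i.isLt,
      fun hj => List.mem_map.2 ⟨⟨j, hj⟩, List.mem_finRange _, rfl⟩⟩
  have hmsymm : msymm m lam = fun y => ∑ α ∈ exponents m lam, 1 * monomialFn (id α) y := by
    funext y
    simp only [one_mul, id]
    rfl
  have hfold : (List.finRange l).foldr (fun i g => (pd (Fin.castLE hl i))^[t] ∘ g) id
      = ((List.finRange l).map (Fin.castLE hl)).foldr (fun i g => (pd i)^[t] ∘ g) id := by
    rw [List.foldr_map]
  rw [hfold, hmsymm, foldr_pd_iterate_sum_monomialFn t hL]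
  funext y
  refine Finset.sum_congr rfl fun α _ => ?_
  congr 1
  · simp [List.map_map, Fin.prod_univ_def, Function.comp_def]
  · congr 1
    funext j
    conv_lhs => rw [← joinFn_take_tailPart (hl := hl) α]
    by_cases hj : (j : ℕ) < l <;> simp [hmem, hj, joinFn, -joinFn_take_tailPart]

end Fibers

theorem stmt11 (m l t : ℕ) (ht : 1 ≤ t) (hl : l ≤ m)
    (lam : Multiset ℕ) (hcard : Multiset.card lam ≤ m) :
    ((List.finRange l).foldr (fun i g => (pd (Fin.castLE hl i))^[t] ∘ g) id) (msymm m lam)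
      = fun y : Fin m → ℝ =>
        ∑ κ ∈ (Multiset.toFinset lam.powerset).filter
            (fun κ => Multiset.card κ = l ∧ ∀ x ∈ κ, t ≤ x),
          (((κ.map Nat.factorial).prod : ℝ)
              / ((κ.map (fun x => Nat.factorial (x - t))).prod : ℝ))
            * msymm l (κ.map (fun x => x - t)) (fun i => y (Fin.castLE hl i))
            * msymm (m - l) (lam - κ)
                (fun j => y ⟨l + (j : ℕ), by have := j.isLt; omega⟩) := by
  rw [foldr_pd_iterate_msymm hl]
  funext y
  set K := (Multiset.toFinset lam.powerset).filter
    (fun κ => Multiset.card κ = l ∧ ∀ x ∈ κ, t ≤ x)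
  have hK (κ : Multiset ℕ) : κ ∈ K ↔ κ ≤ lam ∧ Multiset.card κ = l ∧ ∀ x ∈ κ, t ≤ x := by
    simp [K]
  rw [← Finset.sum_filter_of_ne (p := fun α => (List.ofFn (Fin.take l hl α) : Multiset ℕ) ∈ K),
    ← Finset.sum_fiberwise_eq_sum_filter]
  · refine Finset.sum_congr rfl fun κ hκ => ?_
    obtain ⟨hκlam, hκl, hκt⟩ := (hK κ).1 hκ
    rw [mul_assoc, msymm_mul_msymm hl, ← sum_fiber_eq_sum_product hl hcard hκlam hκl hκt,
      Finset.mul_sum]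
    refine Finset.sum_congr rfl fun α hα => ?_
    rw [prod_descFactorial_eq_div (Finset.mem_filter.1 hα).2 hκt]
  · intro α hα hne
    have hge (i : Fin l) : t ≤ Fin.take l hl α i := by
      by_contra hlt
      refine hne (mul_eq_zero_of_left (Finset.prod_eq_zero (Finset.mem_univ i) ?_) _)
      exact Nat.cast_eq_zero.2 (Nat.descFactorial_eq_zero_iff_lt.2 (by omega))
    refine (hK _).2 ⟨coe_ofFn_take_le hl ht hα hcard hge, by simp, fun x hx => ?_⟩
    obtain ⟨i, rfl⟩ := List.mem_ofFn.1 (Multiset.mem_coe.1 hx)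
    exact hge i
end

section
/- In the commutative polynomial ring $\mathbb{C}[y_1,y_2,\xi_1,\xi_2]$, the ideal $J$ generated by $y_2^2\xi_1^3\xi_2^2 + 3y_2^2\xi_1^2\xi_2^3 + 3y_2^2\xi_1\xi_2^4 + y_2^2\xi_2^5$, $y_1 y_2\xi_1^3 + 3y_1 y_2\xi_1^2\xi_2 + 3y_2^2\xi_1\xi_2^2 + y_2^2\xi_2^3$, $y_1^2\xi_1^2 - y_1 y_2\xi_1^2$, and $y_1 y_2\xi_2^2 - y_2^2\xi_2^2$ has zero set of dimension exactly 2 in $\mathbb{C}^4$. -/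
/-!
The generators of `J` factor as `y₂² ξ₂² (ξ₁ + ξ₂)³`, `y₂ g`, `y₁ ξ₁² (y₁ - y₂)` and
`y₂ ξ₂² (y₁ - y₂)`, where `g ≡ y₁ ξ₁³` modulo `ξ₂`. Hence every prime containing `J` contains
one of the five planes `(y₁, y₂)`, `(y₂, ξ₁)`, `(y₁, ξ₂)`, `(ξ₁, ξ₂)`, `(y₁ - y₂, ξ₁ + ξ₂)`, so
every chain of primes above `J` lies above one of them. Modulo each plane two of the variables
generate everything, which gives `dim ℂ[y, ξ]/J ≤ 2`. Conversely `J` vanishes under `y ↦ 0`, so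
`ℂ[y, ξ]/J` surjects onto `ℂ[ξ₁, ξ₂]`, of dimension `2`.
-/

open MvPolynomial

section KrullDim

variable {R : Type*} [CommRing R]

theorem ringKrullDim_quotient_le_of_forall_isPrime {ι : Type*} (J : Ideal R) (I : ι → Ideal R)
    {n : WithBot ℕ∞} (hcover : ∀ P : Ideal R, P.IsPrime → J ≤ P → ∃ i, I i ≤ P)
    (hdim : ∀ i, ringKrullDim (R ⧸ I i) ≤ n) : ringKrullDim (R ⧸ J) ≤ n := by
  rw [ringKrullDim_quotient]
  refine iSup_le fun p => ?_
  obtain ⟨i, hi⟩ := hcover _ p.head.1.isPrime p.head.2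
  let q : LTSeries (PrimeSpectrum.zeroLocus (R := R) (I i)) :=
    { length := p.length
      toFun := fun k => ⟨(p k).1, hi.trans (p.strictMono.monotone (Fin.zero_le k))⟩
      step := fun k => p.step k }
  calc (p.length : WithBot ℕ∞) = q.length := rfl
    _ ≤ Order.krullDim _ := Order.LTSeries.length_le_krullDim q
    _ = ringKrullDim (R ⧸ I i) := (ringKrullDim_quotient _).symm
    _ ≤ n := hdim i

theorem ringKrullDim_le_ringKrullDim_quotient_of_le_ker {S : Type*} [CommRing S] (f : R →+* S)
    (hf : Function.Surjective f) {J : Ideal R} (hJ : J ≤ RingHom.ker f) :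
    ringKrullDim S ≤ ringKrullDim (R ⧸ J) :=
  ringKrullDim_le_of_surjective _
    (Ideal.Quotient.lift_surjective_of_surjective J (fun _ ha => hJ ha) hf)

end KrullDim

theorem MvPolynomial.ringKrullDim_quotient_le_of_aeval {k σ τ : Type*} [CommRing k]
    [IsNoetherianRing k] [Finite τ] (I : Ideal (MvPolynomial σ k)) (w : τ → MvPolynomial σ k)
    (v : σ → MvPolynomial τ k) (hv : ∀ j, aeval w (v j) - X j ∈ I) :
    ringKrullDim (MvPolynomial σ k ⧸ I) ≤ ringKrullDim k + Nat.card τ := by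
  have hsec : (Ideal.Quotient.mkₐ k I).comp ((aeval w).comp (aeval v)) =
      Ideal.Quotient.mkₐ k I := by
    ext j
    simpa [Ideal.Quotient.eq] using hv j
  have hsurj : Function.Surjective ((Ideal.Quotient.mkₐ k I).comp (aeval w)) := fun y => by
    obtain ⟨x, rfl⟩ := Ideal.Quotient.mk_surjective y
    exact ⟨aeval v x, congr($hsec x)⟩
  calc _ ≤ ringKrullDim (MvPolynomial τ k) := ringKrullDim_le_of_surjective _ hsurj
    _ = _ := MvPolynomial.ringKrullDim_of_isNoetherianRing

noncomputable def muirheadIdeal : Ideal (MvPolynomial (Fin 4) ℂ) :=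
  Ideal.span {X 1 ^ 2 * X 2 ^ 3 * X 3 ^ 2 + 3 * X 1 ^ 2 * X 2 ^ 2 * X 3 ^ 3
      + 3 * X 1 ^ 2 * X 2 * X 3 ^ 4 + X 1 ^ 2 * X 3 ^ 5,
    X 0 * X 1 * X 2 ^ 3 + 3 * X 0 * X 1 * X 2 ^ 2 * X 3
      + 3 * X 1 ^ 2 * X 2 * X 3 ^ 2 + X 1 ^ 2 * X 3 ^ 3,
    X 0 ^ 2 * X 2 ^ 2 - X 0 * X 1 * X 2 ^ 2,
    X 0 * X 1 * X 3 ^ 2 - X 1 ^ 2 * X 3 ^ 2}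

/-- The zero set of `muirheadIdeal` is the union of these five planes. -/
noncomputable def muirheadPlane : Fin 5 → Ideal (MvPolynomial (Fin 4) ℂ) :=
  ![Ideal.span {X 0, X 1}, Ideal.span {X 1, X 2}, Ideal.span {X 0, X 3}, Ideal.span {X 2, X 3},
    Ideal.span {X 0 - X 1, X 2 + X 3}]

theorem ringKrullDim_quotient_muirheadPlane_le (i : Fin 5) :
    ringKrullDim (MvPolynomial (Fin 4) ℂ ⧸ muirheadPlane i) ≤ 2 := by
  suffices ∃ (w : Fin 2 → MvPolynomial (Fin 4) ℂ) (v : Fin 4 → MvPolynomial (Fin 2) ℂ),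
      ∀ j, aeval w (v j) - X j ∈ muirheadPlane i by
    obtain ⟨w, v, hv⟩ := this
    simpa using ringKrullDim_quotient_le_of_aeval _ w v hv
  fin_cases i <;>
  [refine ⟨![X 2, X 3], ![0, 0, X 0, X 1], ?_⟩;
   refine ⟨![X 0, X 3], ![X 0, 0, 0, X 1], ?_⟩;
   refine ⟨![X 1, X 2], ![0, X 0, X 1, 0], ?_⟩;
   refine ⟨![X 0, X 1], ![X 0, X 1, 0, 0], ?_⟩;
   refine ⟨![X 0, X 2], ![X 0, X 0, X 1, -X 1], ?_⟩]
  all_goals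
    simp [Fin.forall_fin_succ, muirheadPlane, Submodule.mem_span_of_mem, ← neg_add', -neg_add_rev]

theorem exists_muirheadPlane_le {P : Ideal (MvPolynomial (Fin 4) ℂ)} (hP : P.IsPrime)
    (hJ : muirheadIdeal ≤ P) : ∃ i, muirheadPlane i ≤ P := by
  obtain ⟨h₁, h₂, h₃, h₄⟩ : _ ∧ _ ∧ _ ∧ _ := by
    simpa only [Set.insert_subset_iff, Set.singleton_subset_iff, SetLike.mem_coe] using
      Ideal.span_le.mp hJ
  have hfac₁ : X 1 ∈ P ∨ X 3 ∈ P ∨ X 2 + X 3 ∈ P := by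
    have : X 1 ^ 2 * X 3 ^ 2 * (X 2 + X 3) ^ 3 ∈ P := by convert h₁ using 1; ring
    simpa [hP.mul_mem_iff_mem_or_mem, hP.pow_mem_iff_mem, or_assoc] using this
  have hfac₂ : X 1 ∈ P ∨
      X 0 * X 2 ^ 3 + X 3 * (3 * X 0 * X 2 ^ 2 + 3 * X 1 * X 2 * X 3 + X 1 * X 3 ^ 2) ∈ P := by
    refine hP.mem_or_mem ?_
    convert h₂ using 1; ring
  have hfac₃ : X 0 ∈ P ∨ X 2 ∈ P ∨ X 0 - X 1 ∈ P := by
    have : X 0 * X 2 ^ 2 * (X 0 - X 1) ∈ P := by convert h₃ using 1; ring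
    simpa [hP.mul_mem_iff_mem_or_mem, hP.pow_mem_iff_mem, or_assoc] using this
  have hfac₄ : X 1 ∈ P ∨ X 3 ∈ P ∨ X 0 - X 1 ∈ P := by
    have : X 1 * X 3 ^ 2 * (X 0 - X 1) ∈ P := by convert h₄ using 1; ring
    simpa [hP.mul_mem_iff_mem_or_mem, hP.pow_mem_iff_mem, or_assoc] using this
  have plane_le {a b} (ha : a ∈ P) (hb : b ∈ P) : Ideal.span {a, b} ≤ P :=
    Ideal.span_le.mpr (Set.pair_subset ha hb)
  by_cases hy₂ : X 1 ∈ P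
  · rcases hfac₃ with hy₁ | hξ₁ | hy₁y₂
    · exact ⟨0, plane_le hy₁ hy₂⟩
    · exact ⟨1, plane_le hy₂ hξ₁⟩
    · exact ⟨0, plane_le (by simpa using P.add_mem hy₁y₂ hy₂) hy₂⟩
  by_cases hξ₂ : X 3 ∈ P
  · have : X 0 * X 2 ^ 3 ∈ P :=
      (P.add_mem_iff_left (P.mul_mem_right _ hξ₂)).mp (hfac₂.resolve_left hy₂)
    rcases hP.mem_or_mem this with hy₁ | hξ₁
    · exact ⟨2, plane_le hy₁ hξ₂⟩
    · exact ⟨3, plane_le (hP.mem_of_pow_mem 3 hξ₁) hξ₂⟩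
  · exact ⟨4, plane_le ((hfac₄.resolve_left hy₂).resolve_left hξ₂)
      ((hfac₁.resolve_left hy₂).resolve_left hξ₂)⟩

noncomputable def eliminateY : MvPolynomial (Fin 4) ℂ →ₐ[ℂ] MvPolynomial (Fin 2) ℂ :=
  aeval ![0, 0, X 0, X 1]

theorem muirheadIdeal_le_ker_eliminateY : muirheadIdeal ≤ RingHom.ker eliminateY := by
  simp [muirheadIdeal, Ideal.span_le, Set.insert_subset_iff, eliminateY]

theorem eliminateY_surjective : Function.Surjective eliminateY := by
  have hsec : eliminateY.comp (aeval ![X 2, X 3]) = AlgHom.id ℂ _ := by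
    ext i
    fin_cases i <;> simp [eliminateY]
  exact fun s => ⟨aeval ![X 2, X 3] s, congr($hsec s)⟩

theorem stmt18 :
    let y₁ : MvPolynomial (Fin 4) ℂ := X 0
    let y₂ : MvPolynomial (Fin 4) ℂ := X 1
    let ξ₁ : MvPolynomial (Fin 4) ℂ := X 2
    let ξ₂ : MvPolynomial (Fin 4) ℂ := X 3
    let p₁ := y₂ ^ 2 * ξ₁ ^ 3 * ξ₂ ^ 2 + 3 * y₂ ^ 2 * ξ₁ ^ 2 * ξ₂ ^ 3
      + 3 * y₂ ^ 2 * ξ₁ * ξ₂ ^ 4 + y₂ ^ 2 * ξ₂ ^ 5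
    let p₂ := y₁ * y₂ * ξ₁ ^ 3 + 3 * y₁ * y₂ * ξ₁ ^ 2 * ξ₂
      + 3 * y₂ ^ 2 * ξ₁ * ξ₂ ^ 2 + y₂ ^ 2 * ξ₂ ^ 3
    let p₃ := y₁ ^ 2 * ξ₁ ^ 2 - y₁ * y₂ * ξ₁ ^ 2
    let p₄ := y₁ * y₂ * ξ₂ ^ 2 - y₂ ^ 2 * ξ₂ ^ 2
    ringKrullDim (MvPolynomial (Fin 4) ℂ ⧸ Ideal.span {p₁, p₂, p₃, p₄}) = 2 := by
  change ringKrullDim (_ ⧸ muirheadIdeal) = 2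
  apply le_antisymm
  · exact ringKrullDim_quotient_le_of_forall_isPrime _ muirheadPlane
      (fun _ => exists_muirheadPlane_le) ringKrullDim_quotient_muirheadPlane_le
  · calc (2 : WithBot ℕ∞) = ringKrullDim (MvPolynomial (Fin 2) ℂ) := by simp
      _ ≤ _ := ringKrullDim_le_ringKrullDim_quotient_of_le_ker (eliminateY : _ →+* _)
          eliminateY_surjective muirheadIdeal_le_ker_eliminateY
end

section
/- Let $F$ be a smooth function on the region $y_1 \neq y_2$, $y_1 y_2 \neq 0$ in $\mathbb{R}^2$ satisfying Muirhead's equations $g_1 F = 0$ and $g_2 F = 0$ (with $g_i$ as defined). Then $\partial_1\partial_2^2 F = h_{00}F + h_{10}\partial_1 F + h_{01}\partial_2 F + h_{11}\partial_1\partial_2 F$ where $h_{00} = \frac{a}{2y_2(y_2-y_1)}$, $h_{10} = \frac{3}{4(y_2-y_1)^2} + \frac{a}{y_2} - \frac{c-y_1}{2y_2(y_2-y_1)}$, $h_{01} = -\frac{3}{4(y_2-y_1)^2}$, $h_{11} = -\frac{c-y_2}{y_2} - \frac{y_1}{2y_2(y_2-y_1)}$. -/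
namespace Stmt19Aux

def U : Set (ℝ × ℝ) := {p : ℝ × ℝ | p.1 ≠ p.2 ∧ p.1 * p.2 ≠ 0}

lemma hUopen : IsOpen U := by
  have h1 : IsOpen {p : ℝ × ℝ | p.1 ≠ p.2} := isOpen_ne_fun continuous_fst continuous_snd
  have h2 : IsOpen {p : ℝ × ℝ | p.1 * p.2 ≠ 0} :=
    isOpen_ne_fun (continuous_fst.mul continuous_snd) continuous_const
  exact h1.inter h2

lemma pv_smooth {G : ℝ × ℝ → ℝ} (hG : ContDiffOn ℝ (⊤ : ℕ∞) G U) (v : ℝ × ℝ) :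
    ContDiffOn ℝ (⊤ : ℕ∞) (fun p => fderiv ℝ G p v) U :=
  (hG.fderiv_of_isOpen hUopen (by simp)).clm_apply contDiffOn_const

lemma slice1 {G : ℝ × ℝ → ℝ} (hG : ContDiffOn ℝ (⊤ : ℕ∞) G U) {p : ℝ × ℝ} (hp : p ∈ U) :
    HasDerivAt (fun t => G (t, p.2)) (fderiv ℝ G p ((1 : ℝ), (0 : ℝ))) p.1 := by
  have hd : HasFDerivAt G (fderiv ℝ G p) p :=
    ((hG.contDiffAt (hUopen.mem_nhds hp)).differentiableAt (by simp)).hasFDerivAt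
  have hg : HasDerivAt (fun t : ℝ => (t, p.2)) ((1 : ℝ), (0 : ℝ)) p.1 :=
    (hasDerivAt_id _).prodMk (hasDerivAt_const _ _)
  exact hd.comp_hasDerivAt p.1 hg

lemma slice2 {G : ℝ × ℝ → ℝ} (hG : ContDiffOn ℝ (⊤ : ℕ∞) G U) {p : ℝ × ℝ} (hp : p ∈ U) :
    HasDerivAt (fun t => G (p.1, t)) (fderiv ℝ G p ((0 : ℝ), (1 : ℝ))) p.2 := by
  have hd : HasFDerivAt G (fderiv ℝ G p) p :=
    ((hG.contDiffAt (hUopen.mem_nhds hp)).differentiableAt (by simp)).hasFDerivAt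
  have hg : HasDerivAt (fun t : ℝ => (p.1, t)) ((0 : ℝ), (1 : ℝ)) p.2 :=
    (hasDerivAt_const _ _).prodMk (hasDerivAt_id _)
  exact hd.comp_hasDerivAt p.2 hg

lemma mem1 {p : ℝ × ℝ} (hp : p ∈ U) : ∀ᶠ t in nhds p.1, (t, p.2) ∈ U := by
  have : Continuous (fun t : ℝ => (t, p.2)) := continuous_id.prodMk continuous_const
  have h := (hUopen.preimage this).mem_nhds (show (fun t : ℝ => (t, p.2)) p.1 ∈ U from hp)
  exact Filter.eventually_of_mem h (fun t ht => ht)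

lemma mem2 {p : ℝ × ℝ} (hp : p ∈ U) : ∀ᶠ t in nhds p.2, (p.1, t) ∈ U := by
  have : Continuous (fun t : ℝ => (p.1, t)) := continuous_const.prodMk continuous_id
  have h := (hUopen.preimage this).mem_nhds (show (fun t : ℝ => (p.1, t)) p.2 ∈ U from hp)
  exact Filter.eventually_of_mem h (fun t ht => ht)

end Stmt19Aux

open Stmt19Aux in
theorem stmt19 (a c : ℝ) (F : ℝ → ℝ → ℝ)
    (hF : ContDiffOn ℝ (⊤ : ℕ∞) (fun p : ℝ × ℝ => F p.1 p.2)
      {p : ℝ × ℝ | p.1 ≠ p.2 ∧ p.1 * p.2 ≠ 0})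
    (hg1 : ∀ y₁ y₂ : ℝ, y₁ ≠ y₂ → y₁ * y₂ ≠ 0 →
      y₁ * d1 (d1 F) y₁ y₂ + (c - y₁) * d1 F y₁ y₂
        + 1 / 2 * (y₂ / (y₁ - y₂)) * (d1 F y₁ y₂ - d2 F y₁ y₂) - a * F y₁ y₂ = 0)
    (hg2 : ∀ y₁ y₂ : ℝ, y₁ ≠ y₂ → y₁ * y₂ ≠ 0 →
      y₂ * d2 (d2 F) y₁ y₂ + (c - y₂) * d2 F y₁ y₂
        + 1 / 2 * (y₁ / (y₂ - y₁)) * (d2 F y₁ y₂ - d1 F y₁ y₂) - a * F y₁ y₂ = 0) :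
    ∀ y₁ y₂ : ℝ, y₁ ≠ y₂ → y₁ * y₂ ≠ 0 →
      d1 (d2 (d2 F)) y₁ y₂
        = (a / (2 * y₂ * (y₂ - y₁))) * F y₁ y₂
          + (3 / (4 * (y₂ - y₁) ^ 2) + a / y₂ - (c - y₁) / (2 * y₂ * (y₂ - y₁))) * d1 F y₁ y₂
          + (-(3 / (4 * (y₂ - y₁) ^ 2))) * d2 F y₁ y₂
          + (-((c - y₂) / y₂) - y₁ / (2 * y₂ * (y₂ - y₁))) * d1 (d2 F) y₁ y₂ := by
  intro y₁ y₂ hne hmul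
  set Fc : ℝ × ℝ → ℝ := fun p : ℝ × ℝ => F p.1 p.2 with hFc
  have hFcU : ContDiffOn ℝ (⊤ : ℕ∞) Fc U := hF
  set P1 : ℝ × ℝ → ℝ := fun p => fderiv ℝ Fc p ((1 : ℝ), (0 : ℝ)) with hP1
  set P2 : ℝ × ℝ → ℝ := fun p => fderiv ℝ Fc p ((0 : ℝ), (1 : ℝ)) with hP2
  have hP1U : ContDiffOn ℝ (⊤ : ℕ∞) P1 U := pv_smooth hFcU _
  have hP2U : ContDiffOn ℝ (⊤ : ℕ∞) P2 U := pv_smooth hFcU _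
  set P22 : ℝ × ℝ → ℝ := fun p => fderiv ℝ P2 p ((0 : ℝ), (1 : ℝ)) with hP22
  have hP22U : ContDiffOn ℝ (⊤ : ℕ∞) P22 U := pv_smooth hP2U _
  have hp : ((y₁, y₂) : ℝ × ℝ) ∈ U := ⟨hne, hmul⟩
  have hy1 : y₁ ≠ 0 := fun h => hmul (by simp [h])
  have hy2 : y₂ ≠ 0 := fun h => hmul (by simp [h])
  have hyd : y₂ - y₁ ≠ 0 := sub_ne_zero.2 (Ne.symm hne)
  have hyd' : y₁ - y₂ ≠ 0 := sub_ne_zero.2 hne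
  -- pointwise identification of d1 F, d2 F with P1, P2 on U
  have hd1 : ∀ p : ℝ × ℝ, p ∈ U → d1 F p.1 p.2 = P1 p := by
    intro p hp'
    exact (slice1 hFcU hp').deriv
  have hd2 : ∀ p : ℝ × ℝ, p ∈ U → d2 F p.1 p.2 = P2 p := by
    intro p hp'
    exact (slice2 hFcU hp').deriv
  -- d2 (d2 F) = P22 on U
  have hd22 : ∀ p : ℝ × ℝ, p ∈ U → d2 (d2 F) p.1 p.2 = P22 p := by
    intro p hp'
    have hev : (fun t => d2 F p.1 t) =ᶠ[nhds p.2] (fun t => P2 (p.1, t)) := by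
      filter_upwards [mem2 hp'] with t ht
      exact hd2 (p.1, t) ht
    have h2' : HasDerivAt (fun t => d2 F p.1 t) (P22 p) p.2 :=
      (slice2 hP2U hp').congr_of_eventuallyEq hev
    exact h2'.deriv
  -- HasDerivAt facts in the first variable at y₁
  have hF1 : HasDerivAt (fun t => F t y₂) (P1 (y₁, y₂)) y₁ := slice1 hFcU hp
  have hD1F : HasDerivAt (fun t => d1 F t y₂) (fderiv ℝ P1 (y₁, y₂) ((1:ℝ), (0:ℝ))) y₁ := by
    have hev : (fun t => d1 F t y₂) =ᶠ[nhds y₁] (fun t => P1 (t, y₂)) := by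
      filter_upwards [mem1 hp] with t ht
      exact hd1 (t, y₂) ht
    exact (slice1 hP1U hp).congr_of_eventuallyEq hev
  have hD2F : HasDerivAt (fun t => d2 F t y₂) (fderiv ℝ P2 (y₁, y₂) ((1:ℝ), (0:ℝ))) y₁ := by
    have hev : (fun t => d2 F t y₂) =ᶠ[nhds y₁] (fun t => P2 (t, y₂)) := by
      filter_upwards [mem1 hp] with t ht
      exact hd2 (t, y₂) ht
    exact (slice1 hP2U hp).congr_of_eventuallyEq hev
  have hD22F : HasDerivAt (fun t => d2 (d2 F) t y₂)
      (fderiv ℝ P22 (y₁, y₂) ((1:ℝ), (0:ℝ))) y₁ := by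
    have hev : (fun t => d2 (d2 F) t y₂) =ᶠ[nhds y₁] (fun t => P22 (t, y₂)) := by
      filter_upwards [mem1 hp] with t ht
      exact hd22 (t, y₂) ht
    exact (slice1 hP22U hp).congr_of_eventuallyEq hev
  -- set abbreviations for the values
  set Fv := F y₁ y₂ with hFv
  set P1v := P1 (y₁, y₂) with hP1v
  set P2v := P2 (y₁, y₂) with hP2v
  set Av := fderiv ℝ P1 (y₁, y₂) ((1:ℝ), (0:ℝ)) with hAv
  set Bv := fderiv ℝ P2 (y₁, y₂) ((1:ℝ), (0:ℝ)) with hBv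
  set Xv := fderiv ℝ P22 (y₁, y₂) ((1:ℝ), (0:ℝ)) with hXv
  -- identify d-expressions at (y₁, y₂)
  have e1 : d1 F y₁ y₂ = P1v := hd1 (y₁, y₂) hp
  have e2 : d2 F y₁ y₂ = P2v := hd2 (y₁, y₂) hp
  have e12 : d1 (d2 F) y₁ y₂ = Bv := hD2F.deriv
  have e11 : d1 (d1 F) y₁ y₂ = Av := hD1F.deriv
  have e122 : d1 (d2 (d2 F)) y₁ y₂ = Xv := hD22F.deriv
  -- differentiate the g2 equation in the first variable
  have hq : HasDerivAt (fun t => t / (y₂ - t))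
      ((1 * (y₂ - y₁) - y₁ * (0 - 1)) / (y₂ - y₁) ^ 2) y₁ :=
    (hasDerivAt_id y₁).div ((hasDerivAt_const y₁ y₂).sub (hasDerivAt_id y₁)) hyd
  have hφ : HasDerivAt
      (fun t => y₂ * d2 (d2 F) t y₂ + (c - y₂) * d2 F t y₂
        + 1 / 2 * (t / (y₂ - t)) * (d2 F t y₂ - d1 F t y₂) - a * F t y₂)
      (y₂ * Xv + (c - y₂) * Bv
        + (1 / 2 * ((1 * (y₂ - y₁) - y₁ * (0 - 1)) / (y₂ - y₁) ^ 2)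
            * (d2 F y₁ y₂ - d1 F y₁ y₂)
          + 1 / 2 * (y₁ / (y₂ - y₁)) * (Bv - Av)) - a * P1v) y₁ := by
    exact (((hD22F.const_mul y₂).add (hD2F.const_mul (c - y₂))).add
      ((hq.const_mul (1/2 : ℝ)).mul (hD2F.sub hD1F))).sub (hF1.const_mul a)
  have hφ0 : HasDerivAt
      (fun t => y₂ * d2 (d2 F) t y₂ + (c - y₂) * d2 F t y₂
        + 1 / 2 * (t / (y₂ - t)) * (d2 F t y₂ - d1 F t y₂) - a * F t y₂) 0 y₁ := by
    apply (hasDerivAt_const y₁ (0:ℝ)).congr_of_eventuallyEq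
    filter_upwards [mem1 hp] with t ht
    exact hg2 t y₂ ht.1 ht.2
  have eq2 : y₂ * Xv + (c - y₂) * Bv
      + (1 / 2 * ((1 * (y₂ - y₁) - y₁ * (0 - 1)) / (y₂ - y₁) ^ 2) * (P2v - P1v)
        + 1 / 2 * (y₁ / (y₂ - y₁)) * (Bv - Av)) - a * P1v = 0 := by
    have h0 := hφ.unique hφ0
    rw [e1, e2] at h0
    exact h0
  -- the g1 equation at (y₁, y₂), in P-form
  have eq1 : y₁ * Av + (c - y₁) * P1v + 1 / 2 * (y₂ / (y₁ - y₂)) * (P1v - P2v) - a * Fv = 0 := by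
    have h := hg1 y₁ y₂ hne hmul
    rw [e11, e1, e2] at h
    exact h
  -- final algebra
  rw [e122, e1, e2, e12]
  have hA : Av = (a * Fv - (c - y₁) * P1v - 1 / 2 * (y₂ / (y₁ - y₂)) * (P1v - P2v)) / y₁ := by
    rw [eq_div_iff hy1]; linear_combination eq1
  have hX : Xv = (a * P1v - (c - y₂) * Bv
      - 1 / 2 * ((1 * (y₂ - y₁) - y₁ * (0 - 1)) / (y₂ - y₁) ^ 2) * (P2v - P1v)
      - 1 / 2 * (y₁ / (y₂ - y₁)) * (Bv - Av)) / y₂ := by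
    rw [eq_div_iff hy2]; linear_combination eq2
  rw [hX, hA]
  field_simp
  ring
end
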